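/- Suppose $n = 1$ and $f \in C(S^1, \mathbb{R})$ satisfies: for every half plane $H$ through the origin and every $x, y \in S^1 \cap H$, $(f(x) - f(Rx))(f(y) - f(Ry)) \ge 0$, where $R$ is the reflection with respect to $\partial H$. Then there exists $p \in S^1$ and an increasing function $\phi: [-1,1] \to \mathbb{R}$ such that $f(x) = \phi(x\cdot p)$ for all $x \in S^1$. -/

import Mathlib

/-!
Write `g θ = f (cos θ, sin θ)`. For the half plane bounded by the line at angle `β`, the
reflection acts as `θ ↦ 2β - θ`, and the hypothesis says that the gap `g θ - g (2β - θ)` has one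
sign on the arc `[β - π, β]`. The axes `β` where the gap is somewhere positive and those where it
is somewhere negative form disjoint open sets exchanged by `β ↦ β + π`, so by connectedness of `ℝ`
some axis `c` is a symmetry axis of `g`. A second symmetry axis in `(c, c + π)` would give `g` a
period at most `π`, which forces all gaps to vanish, so `g` is constant. Otherwise connectedness of
`(c, c + π)` makes the gap sign constant on it, i.e. `g` is monotone on `[c, c + π]`, and then
`g θ = φ (cos (θ - p))` with `p = c` or `p = c + π`.
-/

open Metric Set
open scoped RealInnerProductSpace

noncomputable section

namespace CircleReflection

open Real Function

def HalfPlaneCondition (g : ℝ → ℝ) : Prop :=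
  ∀ β, ∀ θ₁ ∈ Icc (β - π) β, ∀ θ₂ ∈ Icc (β - π) β,
    0 ≤ (g θ₁ - g (2 * β - θ₁)) * (g θ₂ - g (2 * β - θ₂))

/-- The axes where the reflection gap is somewhere negative; those where it is somewhere positive
are `risingAxes (-g)`. -/
def risingAxes (g : ℝ → ℝ) : Set ℝ :=
  {β | ∃ θ ∈ Ioo (β - π) β, g θ < g (2 * β - θ)}

variable {g : ℝ → ℝ}

lemma HalfPlaneCondition.disjoint_risingAxes_neg (hP : HalfPlaneCondition g) :
    Disjoint (risingAxes g) (risingAxes (-g)) := by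
  refine disjoint_left.2 fun β ⟨θ₁, h₁, hlt₁⟩ ⟨θ₂, h₂, hlt₂⟩ => ?_
  have := hP β θ₁ (Ioo_subset_Icc_self h₁) θ₂ (Ioo_subset_Icc_self h₂)
  simp only [Pi.neg_apply, neg_lt_neg_iff] at hlt₂
  nlinarith

lemma isOpen_risingAxes (hg : Continuous g) : IsOpen (risingAxes g) := by
  have : risingAxes g = ⋃ θ, Ioo θ (θ + π) ∩ {β | g θ < g (2 * β - θ)} := by
    ext β
    simp only [risingAxes, mem_iUnion, mem_inter_iff, mem_Ioo, mem_ofPred_eq]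
    constructor <;> rintro ⟨θ, ⟨h₁, h₂⟩, h⟩ <;> exact ⟨θ, ⟨by linarith, by linarith⟩, h⟩
  rw [this]
  exact isOpen_iUnion fun θ => isOpen_Ioo.inter (isOpen_lt continuous_const (by fun_prop))

lemma add_pi_mem_risingAxes_neg (hper : Periodic g (2 * π)) {β : ℝ} (hβ : β ∈ risingAxes g) :
    β + π ∈ risingAxes (-g) := by
  obtain ⟨θ, ⟨h₁, h₂⟩, hlt⟩ := hβ
  refine ⟨2 * β - θ, ⟨by linarith, by linarith⟩, ?_⟩
  rwa [Pi.neg_apply, Pi.neg_apply, neg_lt_neg_iff,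
    show 2 * (β + π) - (2 * β - θ) = θ + 2 * π by ring, hper θ]

lemma exists_notMem_risingAxes (hg : Continuous g) (hper : Periodic g (2 * π))
    (hP : HalfPlaneCondition g) : ∃ c, c ∉ risingAxes g ∧ c ∉ risingAxes (-g) := by
  by_contra! hcover
  have hper' : Periodic (-g) (2 * π) := fun θ => by simp [hper θ]
  rcases isPreconnected_univ.subset_or_subset (isOpen_risingAxes hg) (isOpen_risingAxes hg.neg)
    hP.disjoint_risingAxes_neg (fun c _ => (em _).imp_right (hcover c)) with h | h
  · exact disjoint_left.1 hP.disjoint_risingAxes_neg (h (mem_univ (0 + π)))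
      (add_pi_mem_risingAxes_neg hper (h (mem_univ 0)))
  · have := add_pi_mem_risingAxes_neg hper' (h (mem_univ 0))
    rw [neg_neg] at this
    exact disjoint_left.1 hP.disjoint_risingAxes_neg this (h (mem_univ _))

lemma symm_of_notMem_risingAxes (hg : Continuous g) (hper : Periodic g (2 * π)) {c : ℝ}
    (h₁ : c ∉ risingAxes g) (h₂ : c ∉ risingAxes (-g)) (θ : ℝ) : g (2 * c - θ) = g θ := by
  have hIoo : EqOn (fun θ => g (2 * c - θ)) g (Ioo (c - π) c) := fun θ hθ =>
    le_antisymm (not_lt.1 fun h => h₁ ⟨θ, hθ, h⟩) (not_lt.1 fun h => h₂ ⟨θ, hθ, by simpa using h⟩)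
  have hIcc : EqOn (fun θ => g (2 * c - θ)) g (Icc (c - π) c) :=
    hIoo.of_subset_closure (by fun_prop) hg.continuousOn Ioo_subset_Icc_self
      (by rw [closure_Ioo (by linarith [pi_pos])])
  have hwide : ∀ θ ∈ Icc (c - π) (c + π), g (2 * c - θ) = g θ := by
    rintro θ ⟨hθ₁, hθ₂⟩
    rcases le_total θ c with h | h
    · exact hIcc ⟨hθ₁, h⟩
    · have := hIcc (x := 2 * c - θ) ⟨by linarith, by linarith⟩
      simp only [sub_sub_cancel] at this
      exact this.symm
  obtain ⟨k, ⟨hk₁, hk₂⟩, -⟩ := existsUnique_sub_zsmul_mem_Ico two_pi_pos θ (c - π)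
  have := hwide (θ - k • (2 * π)) ⟨hk₁, by linarith⟩
  rwa [show 2 * c - (θ - k • (2 * π)) = 2 * c - θ + k • (2 * π) by abel, hper.zsmul k,
    hper.sub_zsmul_eq] at this

lemma periodic_of_symm {a b : ℝ} (ha : ∀ θ, g (2 * a - θ) = g θ)
    (hb : ∀ θ, g (2 * b - θ) = g θ) : Periodic g (2 * (b - a)) := fun θ => by
  rw [show θ + 2 * (b - a) = 2 * b - (2 * a - θ) by ring, hb, ha]

lemma HalfPlaneCondition.eq_of_periodic (hP : HalfPlaneCondition g) {T : ℝ}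
    (hT : Periodic g T) (hT₀ : 0 < T) (hTπ : T ≤ π) (x y : ℝ) : g x = g y := by
  suffices hsymm : ∀ β θ, g (2 * β - θ) = g θ by
    rw [← hsymm ((x + y) / 2) y, show 2 * ((x + y) / 2) - y = x by ring]
  intro β θ
  have hwindow : Ico (β - π) (β - π + T) ⊆ Icc (β - π) β :=
    Ico_subset_Icc_self.trans (Icc_subset_Icc_right (by linarith))
  obtain ⟨k₁, hk₁, -⟩ := existsUnique_sub_zsmul_mem_Ico hT₀ θ (β - π)
  obtain ⟨k₂, hk₂, -⟩ := existsUnique_sub_zsmul_mem_Ico hT₀ (2 * β - (θ - k₁ • T)) (β - π)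
  set θ₁ := θ - k₁ • T
  set θ₂ := 2 * β - θ₁ - k₂ • T
  -- reflecting `θ₂` lands on a translate of `θ₁`, so the two reflection gaps have opposite signs
  have hθ₂ : g θ₂ = g (2 * β - θ₁) := hT.sub_zsmul_eq k₂
  have hθ₂' : g (2 * β - θ₂) = g θ₁ := by
    rw [show 2 * β - θ₂ = θ₁ + k₂ • T by simp only [θ₂]; abel, hT.zsmul k₂]
  have hprod := hP β θ₁ (hwindow hk₁) θ₂ (hwindow hk₂)
  rw [hθ₂, hθ₂'] at hprod
  have hθ₁ : g (2 * β - θ₁) = g θ₁ := by nlinarith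
  rwa [show 2 * β - θ₁ = 2 * β - θ + k₁ • T by simp only [θ₁]; abel, hT.zsmul k₁,
    hT.sub_zsmul_eq] at hθ₁

lemma antitoneOn_of_disjoint_risingAxes {c : ℝ} (h : Disjoint (Ioo c (c + π)) (risingAxes g)) :
    AntitoneOn g (Icc c (c + π)) := by
  intro a ha b hb hab
  rcases hab.eq_or_lt with rfl | hlt
  · rfl
  by_contra! hgt
  refine disjoint_left.1 h (show (a + b) / 2 ∈ Ioo c (c + π) from
    ⟨by linarith [ha.1], by linarith [hb.2]⟩) ⟨a, ⟨by linarith [ha.1, hb.2], by linarith⟩, ?_⟩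
  rwa [show 2 * ((a + b) / 2) - a = b by ring]

lemma antitoneOn_or_monotoneOn (hg : Continuous g) (hper : Periodic g (2 * π))
    (hP : HalfPlaneCondition g) {c : ℝ} (h₁ : c ∉ risingAxes g) (h₂ : c ∉ risingAxes (-g)) :
    AntitoneOn g (Icc c (c + π)) ∨ MonotoneOn g (Icc c (c + π)) := by
  by_cases hZ : ∃ β ∈ Ioo c (c + π), β ∉ risingAxes g ∧ β ∉ risingAxes (-g)
  · obtain ⟨β, ⟨hβ₁, hβ₂⟩, hβ, hβ'⟩ := hZ
    have hp := periodic_of_symm (symm_of_notMem_risingAxes hg hper h₁ h₂)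
      (symm_of_notMem_risingAxes hg hper hβ hβ')
    have hconst : ∀ x y, g x = g y := by
      rcases le_total (β - c) (π / 2) with h | h
      · exact hP.eq_of_periodic hp (by linarith) (by linarith)
      · exact hP.eq_of_periodic (hper.sub_period hp) (by linarith) (by linarith)
    exact Or.inl fun a _ b _ _ => (hconst a b).ge
  push Not at hZ
  rcases isPreconnected_Ioo.subset_or_subset (isOpen_risingAxes hg) (isOpen_risingAxes hg.neg)
    hP.disjoint_risingAxes_neg (fun β hβ => (em _).imp_right (hZ β hβ)) with h | h
  · refine Or.inr ?_
    simpa using (antitoneOn_of_disjoint_risingAxes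
      (hP.disjoint_risingAxes_neg.mono_left h)).neg
  · exact Or.inl (antitoneOn_of_disjoint_risingAxes (hP.disjoint_risingAxes_neg.symm.mono_left h))

lemma eq_comp_arccos_cos (hper : Periodic g (2 * π)) {c : ℝ}
    (hsymm : ∀ θ, g (2 * c - θ) = g θ) (θ : ℝ) : g θ = g (c + arccos (cos (θ - c))) := by
  obtain ⟨k, ⟨hk₁, hk₂⟩, -⟩ := existsUnique_sub_zsmul_mem_Ico two_pi_pos (θ - c) (-π)
  set s := θ - c - k • (2 * π)
  have hg : g θ = g (c + s) := by
    rw [show c + s = θ - k • (2 * π) by simp only [s]; abel, hper.sub_zsmul_eq]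
  rw [hg, ← cos_periodic.sub_zsmul_eq k]
  rcases le_total 0 s with hs | hs
  · rw [arccos_cos hs (by linarith)]
  · rw [← cos_neg, arccos_cos (by linarith) (by linarith), ← hsymm (c + s)]
    congr 1
    ring

theorem exists_monotoneOn_comp_cos_sub (hg : Continuous g) (hper : Periodic g (2 * π))
    (hP : HalfPlaneCondition g) :
    ∃ p, ∃ φ : ℝ → ℝ, MonotoneOn φ (Icc (-1) 1) ∧ ∀ θ, g θ = φ (cos (θ - p)) := by
  obtain ⟨c, h₁, h₂⟩ := exists_notMem_risingAxes hg hper hP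
  have hrep := eq_comp_arccos_cos hper (symm_of_notMem_risingAxes hg hper h₁ h₂)
  have hmem : ∀ t, c + arccos t ∈ Icc c (c + π) := fun t =>
    ⟨le_add_of_nonneg_right (arccos_nonneg t), by linarith [arccos_le_pi t]⟩
  rcases antitoneOn_or_monotoneOn hg hper hP h₁ h₂ with hanti | hmono
  · exact ⟨c, fun t => g (c + arccos t),
      fun a _ b _ hab => hanti (hmem b) (hmem a) (by linarith [arccos_le_arccos hab]), hrep⟩
  · refine ⟨c + π, fun t => g (c + arccos (-t)), fun a _ b _ hab =>
      hmono (hmem _) (hmem _) (by linarith [arccos_le_arccos (neg_le_neg hab)]), fun θ => ?_⟩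
    rw [show θ - (c + π) = θ - c - π by ring, cos_sub_pi]
    simpa only [neg_neg] using hrep θ

def unitVec (θ : ℝ) : EuclideanSpace ℝ (Fin 2) := !₂[cos θ, sin θ]

lemma inner_unitVec (θ α : ℝ) : ⟪unitVec θ, unitVec α⟫ = cos (θ - α) := by
  simp [unitVec, EuclideanSpace.inner_eq_star_dotProduct, cos_sub]
  ring

lemma norm_unitVec (θ : ℝ) : ‖unitVec θ‖ = 1 := by
  simp [EuclideanSpace.norm_eq, unitVec]

lemma unitVec_mem_sphere (θ : ℝ) : unitVec θ ∈ sphere (0 : EuclideanSpace ℝ (Fin 2)) 1 :=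
  mem_sphere_zero_iff_norm.2 (norm_unitVec θ)

lemma continuous_unitVec : Continuous unitVec := by
  unfold unitVec; fun_prop

lemma periodic_unitVec : Periodic unitVec (2 * π) := fun θ => by
  simp [unitVec]

lemma unitVec_sub_reflect (θ α : ℝ) :
    unitVec θ - (2 * ⟪unitVec θ, unitVec α⟫) • unitVec α = unitVec (2 * α + π - θ) := by
  rw [inner_unitVec, show 2 * α + π - θ = α + (α - θ) + π by ring]
  ext i
  fin_cases i
  · simp only [unitVec, Fin.zero_eta, Fin.isValue, PiLp.sub_apply, Matrix.cons_val_zero,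
      PiLp.smul_apply, smul_eq_mul, cos_add, sin_add, cos_sub, sin_sub, cos_pi, sin_pi]
    linear_combination (-cos θ) * sin_sq_add_cos_sq α
  · simp only [unitVec, Fin.mk_one, Fin.isValue, PiLp.sub_apply, Matrix.cons_val_one,
      Matrix.cons_val_fin_one, PiLp.smul_apply, smul_eq_mul, cos_add, sin_add, cos_sub, sin_sub,
      cos_pi, sin_pi]
    linear_combination (-sin θ) * sin_sq_add_cos_sq α

lemma exists_unitVec_eq {x : EuclideanSpace ℝ (Fin 2)}
    (hx : x ∈ sphere (0 : EuclideanSpace ℝ (Fin 2)) 1) : ∃ θ, unitVec θ = x := by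
  set z : ℂ := ⟨x 0, x 1⟩
  have hz : ‖z‖ = 1 := by
    rw [mem_sphere_zero_iff_norm, EuclideanSpace.norm_eq, Fin.sum_univ_two] at hx
    simpa [Complex.norm_def, Complex.normSq_apply, z, ← sq] using hx
  refine ⟨z.arg, ?_⟩
  ext i
  fin_cases i
  · simp [unitVec, Complex.cos_arg (norm_ne_zero_iff.1 (hz.trans_ne one_ne_zero)), hz, z]
  · simp [unitVec, Complex.sin_arg, hz, z]

lemma halfPlaneCondition_comp_unitVec {f : EuclideanSpace ℝ (Fin 2) → ℝ}
    (h : ∀ u : EuclideanSpace ℝ (Fin 2), ‖u‖ = 1 →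
      ∀ x ∈ sphere (0 : EuclideanSpace ℝ (Fin 2)) 1,
      ∀ y ∈ sphere (0 : EuclideanSpace ℝ (Fin 2)) 1,
        0 ≤ ⟪x, u⟫ → 0 ≤ ⟪y, u⟫ →
        0 ≤ (f x - f (x - (2 * ⟪x, u⟫) • u)) * (f y - f (y - (2 * ⟪y, u⟫) • u))) :
    HalfPlaneCondition (f ∘ unitVec) := by
  intro β θ₁ h₁ θ₂ h₂
  -- the half plane with inner normal `unitVec (β - π / 2)` meets the circle in the arc `[β - π, β]`
  have hH : ∀ θ ∈ Icc (β - π) β, 0 ≤ ⟪unitVec θ, unitVec (β - π / 2)⟫ := fun θ hθ => by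
    rw [inner_unitVec, show θ - (β - π / 2) = π / 2 - (β - θ) by ring, cos_pi_div_two_sub]
    exact sin_nonneg_of_nonneg_of_le_pi (by linarith [hθ.2]) (by linarith [hθ.1])
  have hR : ∀ θ, 2 * (β - π / 2) + π - θ = 2 * β - θ := fun θ => by ring
  simpa only [comp_apply, unitVec_sub_reflect, hR] using
    h _ (norm_unitVec _) _ (unitVec_mem_sphere θ₁) _ (unitVec_mem_sphere θ₂) (hH θ₁ h₁) (hH θ₂ h₂)

end CircleReflection

open CircleReflection

theorem stmt_9 (f : EuclideanSpace ℝ (Fin 2) → ℝ)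
    (hf : ContinuousOn f (sphere (0 : EuclideanSpace ℝ (Fin 2)) 1))
    (h : ∀ u : EuclideanSpace ℝ (Fin 2), ‖u‖ = 1 →
      ∀ x ∈ sphere (0 : EuclideanSpace ℝ (Fin 2)) 1,
      ∀ y ∈ sphere (0 : EuclideanSpace ℝ (Fin 2)) 1,
        0 ≤ ⟪x, u⟫ → 0 ≤ ⟪y, u⟫ →
        0 ≤ (f x - f (x - (2 * ⟪x, u⟫) • u)) * (f y - f (y - (2 * ⟪y, u⟫) • u))) :
    ∃ p ∈ sphere (0 : EuclideanSpace ℝ (Fin 2)) 1,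
      ∃ φ : ℝ → ℝ, MonotoneOn φ (Icc (-1 : ℝ) 1) ∧
        ∀ x ∈ sphere (0 : EuclideanSpace ℝ (Fin 2)) 1, f x = φ ⟪x, p⟫ := by
  obtain ⟨p, φ, hφ, hrep⟩ := exists_monotoneOn_comp_cos_sub
    (hf.comp_continuous continuous_unitVec unitVec_mem_sphere) (periodic_unitVec.comp f)
    (halfPlaneCondition_comp_unitVec h)
  refine ⟨unitVec p, unitVec_mem_sphere p, φ, hφ, fun x hx => ?_⟩
  obtain ⟨θ, rfl⟩ := exists_unitVec_eq hx
  rw [inner_unitVec]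
  exact hrep θ

end
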